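/- arXiv:2312.01516 — 3 statements merged into one kernel-verified Lean document; each statement's English description precedes it below -/
import Mathlib

section
/- Let G be a finite simple graph, X a unital C*-algebra, and U a magic unitary over X that commutes with the adjacency matrix of G. If u_{xy} ≠ 0 for vertices x, y, then deg(x) = deg(y). -/
/-- A magic unitary over a unital C*-algebra: a square matrix of self-adjoint projections
whose rows and columns sum to 1, with orthogonality along rows and columns. -/
def IsMagicUnitary {X : Type*} [CStarAlgebra X] {n : Type*} [Fintype n]
    (u : Matrix n n X) : Prop :=
  (∀ i j, IsSelfAdjoint (u i j)) ∧ (∀ i j, u i j * u i j = u i j) ∧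
  (∀ i, ∑ j, u i j = 1) ∧ (∀ j, ∑ i, u i j = 1) ∧
  (∀ i j l, j ≠ l → u i j * u i l = 0) ∧
  (∀ j i l, i ≠ l → u i j * u l j = 0)

/-- If a magic unitary adapted to a finite graph G (i.e. commuting with its adjacency
matrix) has U x y ≠ 0, then x and y have the same degree. -/
theorem degree_eq_of_magic_unitary_entry_ne_zero {V : Type*} [Fintype V] [DecidableEq V]
    (G : SimpleGraph V) [DecidableRel G.Adj]
    {X : Type*} [CStarAlgebra X] (U : Matrix V V X) (hU : IsMagicUnitary U)
    (hcomm : U * G.adjMatrix X = G.adjMatrix X * U)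
    {x y : V} (h : U x y ≠ 0) :
    G.degree x = G.degree y := by
  unfold IsMagicUnitary at hU
  obtain ⟨hsa, hidem, hrow, hcol, horth, hcorth⟩ := hU
  have hA : ∀ w : V, ∑ z, G.adjMatrix X w z = (G.degree w : X) := by
    intro w
    have := SimpleGraph.adjMatrix_mulVec_const_apply (G := G) (a := (1 : X)) (v := w)
    simpa [SimpleGraph.degree, SimpleGraph.neighborFinset_eq_filter] using this
  have key : ∑ w, U x w * (G.degree w : X) = (G.degree x : X) := by
    calc ∑ w, U x w * (G.degree w : X)
        = ∑ w, ∑ z, U x w * G.adjMatrix X w z := by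
          refine Finset.sum_congr rfl fun w _ => ?_
          rw [← Finset.mul_sum, hA]
      _ = ∑ z, (U * G.adjMatrix X) x z := by
          rw [Finset.sum_comm]
          simp only [Matrix.mul_apply]
      _ = ∑ z, (G.adjMatrix X * U) x z := by rw [hcomm]
      _ = ∑ w, G.adjMatrix X x w * ∑ z, U w z := by
          simp only [Matrix.mul_apply]
          rw [Finset.sum_comm]
          simp only [Finset.mul_sum]
      _ = ∑ w, G.adjMatrix X x w := by simp [hrow]
      _ = (G.degree x : X) := hA x
  have key2 : (G.degree y : X) * U x y = (G.degree x : X) * U x y := by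
    calc (G.degree y : X) * U x y
        = U x y * U x y * (G.degree y : X) := by
          rw [hidem, (Nat.cast_commute (G.degree y) (U x y)).eq]
      _ = ∑ w, U x w * U x y * (G.degree w : X) := by
          rw [Finset.sum_eq_single y (fun w _ hw => by rw [horth x w y hw, zero_mul])
            (by simp)]
      _ = (∑ w, U x w * (G.degree w : X)) * U x y := by
          rw [Finset.sum_mul]
          refine Finset.sum_congr rfl fun w _ => ?_
          rw [mul_assoc, ← (Nat.cast_commute (G.degree w) (U x y)).eq, ← mul_assoc]
      _ = (G.degree x : X) * U x y := by rw [key]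
  have key3 : ((G.degree y : ℂ) - (G.degree x : ℂ)) • U x y = 0 := by
    rw [sub_smul, Nat.cast_smul_eq_nsmul, Nat.cast_smul_eq_nsmul, nsmul_eq_mul,
      nsmul_eq_mul, key2, sub_self]
  rcases smul_eq_zero.mp key3 with hc | hc
  · exact (Nat.cast_inj.mp (sub_eq_zero.mp hc)).symm
  · exact absurd hc h
end

section
/- Lovász's formula for graphs: for finite simple graphs G and H, the number of graph homomorphisms satisfies hom(G,H) = ∑_A (quo(G,A)/aut(A)) · mon(A,H), where the sum ranges over a system of representatives A of isomorphism classes of graphs, quo(G,A) is the number of quotient maps (homomorphisms surjective on vertices and edges) from G to A, mon(A,H) is the number of injective homomorphisms from A to H, and aut(A) is the number of automorphisms of A. -/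
/-!
Every homomorphism `f : G →g H` factors as a quotient map onto its image graph followed by a
monomorphism, and any two such factorizations differ by a unique isomorphism of the middle graph.
So the pairs (quotient `G → A`, monomorphism `A → H`) composing to `f` form an `Aut A`-torsor when
`f` factors through `A` and are absent otherwise, whence
`quo(G,A) · mon(A,H) = aut(A) · #{f | f factors through A}`. Over a system of representatives `A`,
each `f` factors through exactly one of them.
-/

/-- The number of graph homomorphisms from G to H. -/
noncomputable def homCount {V W : Type*} (G : SimpleGraph V) (H : SimpleGraph W) : ℕ :=
  Nat.card (G →g H)

/-- The number of injective graph homomorphisms (monomorphisms) from G to H. -/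
noncomputable def monCount {V W : Type*} (G : SimpleGraph V) (H : SimpleGraph W) : ℕ :=
  Nat.card {f : G →g H // Function.Injective f}

/-- The number of quotient maps from G to H: homomorphisms surjective on both
vertices and edges. -/
noncomputable def quoCount {V W : Type*} (G : SimpleGraph V) (H : SimpleGraph W) : ℕ :=
  Nat.card {f : G →g H // Function.Surjective f ∧
    ∀ a b : W, H.Adj a b → ∃ x y : V, G.Adj x y ∧ f x = a ∧ f y = b}

/-- The number of automorphisms of G. -/
noncomputable def autCount {V : Type*} (G : SimpleGraph V) : ℕ :=
  Nat.card (G ≃g G)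

open Function

namespace SimpleGraph

variable {V W X U : Type*} {G : SimpleGraph V} {A : SimpleGraph W} {B : SimpleGraph X}
  {H : SimpleGraph U}

def Hom.IsQuotient (q : G →g A) : Prop :=
  Surjective q ∧ ∀ a b, A.Adj a b → ∃ x y, G.Adj x y ∧ q x = a ∧ q y = b

def FactorsThrough (A : SimpleGraph W) (f : G →g H) : Prop :=
  ∃ (q : G →g A) (m : A →g H), q.IsQuotient ∧ Injective m ∧ m.comp q = f

namespace Hom.IsQuotient

variable {q : G →g A}

theorem adj_of_comp_eq (hq : q.IsQuotient) {q' : G →g B} {g : W → X}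
    (hg : ∀ x, g (q x) = q' x) {a b : W} (h : A.Adj a b) : B.Adj (g a) (g b) := by
  obtain ⟨x, y, hxy, rfl, rfl⟩ := hq.2 a b h
  rw [hg, hg]
  exact q'.map_adj hxy

theorem iso_comp (hq : q.IsQuotient) (ψ : A ≃g B) : (ψ.toHom.comp q).IsQuotient := by
  refine ⟨ψ.surjective.comp hq.1, fun a b hab => ?_⟩
  obtain ⟨x, y, hxy, hx, hy⟩ := hq.2 _ _ (ψ.symm.map_adj_iff.mpr hab)
  exact ⟨x, y, hxy, by simp [hx], by simp [hy]⟩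

/-- Both middle graphs are identified with the common range of `m` and `m'`. -/
theorem exists_iso_of_comp_eq (hq : q.IsQuotient) {q' : G →g B} (hq' : q'.IsQuotient)
    {m : A →g H} {m' : B →g H} (hm : Injective m) (hm' : Injective m')
    (h : m.comp q = m'.comp q') :
    ∃ σ : A ≃g B, σ.toHom.comp q = q' ∧ m'.comp σ.toHom = m := by
  have hrange : Set.range m = Set.range m' := by
    rw [← hq.1.range_comp, ← hq'.1.range_comp, ← coe_comp, h, coe_comp]
  let e : W ≃ X := (Equiv.ofInjective m hm).trans
    ((Equiv.setCongr hrange).trans (Equiv.ofInjective m' hm').symm)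
  have hme : ∀ a, m' (e a) = m a := fun a => Equiv.apply_ofInjective_symm hm' _
  have he : ∀ x, e (q x) = q' x := fun x => hm' (by rw [hme]; exact DFunLike.congr_fun h x)
  have he_symm : ∀ x, e.symm (q' x) = q x := fun x => e.symm_apply_eq.mpr (he x).symm
  refine ⟨⟨e, fun {a b} => ⟨fun hab => ?_, hq.adj_of_comp_eq he⟩⟩, ?_, ?_⟩
  · simpa using hq'.adj_of_comp_eq he_symm hab
  · ext x; exact he x
  · ext a; exact hme a

end Hom.IsQuotient

variable {f : G →g H}

theorem FactorsThrough.of_iso (hf : FactorsThrough A f) (ψ : A ≃g B) : FactorsThrough B f := by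
  obtain ⟨q, m, hq, hm, rfl⟩ := hf
  refine ⟨ψ.toHom.comp q, m.comp ψ.symm.toHom, hq.iso_comp ψ, hm.comp ψ.symm.injective, ?_⟩
  ext x; simp

theorem FactorsThrough.nonempty_iso (hA : FactorsThrough A f) (hB : FactorsThrough B f) :
    Nonempty (A ≃g B) := by
  obtain ⟨q, m, hq, hm, rfl⟩ := hA
  obtain ⟨q', m', hq', hm', h⟩ := hB
  obtain ⟨σ, -, -⟩ := hq.exists_iso_of_comp_eq hq' hm hm' h.symm
  exact ⟨σ⟩

theorem factorsThrough_map_rangeFactorization (f : G →g H) :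
    FactorsThrough (G.map (Set.rangeFactorization f)) f := by
  refine ⟨Hom.map _ G fun h heq => H.ne_of_adj (f.map_adj h) (congrArg Subtype.val heq),
    ⟨Subtype.val, ?_⟩, ⟨Set.rangeFactorization_surjective, ?_⟩, Subtype.val_injective, rfl⟩
  · rintro _ _ ⟨-, x, y, hxy, rfl, rfl⟩
    exact f.map_adj hxy
  · rintro _ _ ⟨-, x, y, hxy, rfl, rfl⟩
    exact ⟨x, y, hxy, rfl, rfl⟩

theorem exists_factorsThrough_fin [Fintype V] (f : G →g H) :
    ∃ k ≤ Fintype.card V, ∃ A : SimpleGraph (Fin k), FactorsThrough A f := by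
  classical
  exact ⟨_, Fintype.card_range_le f, _,
    (factorsThrough_map_rangeFactorization f).of_iso (overFinIso _ rfl)⟩

variable (A) in
def Factorization (f : G →g H) : Type _ :=
  {p : {q : G →g A // q.IsQuotient} × {m : A →g H // Injective m} // p.2.1.comp p.1.1 = f}

theorem FactorsThrough.card_factorization (hf : FactorsThrough A f) :
    Nat.card (Factorization A f) = Nat.card (A ≃g A) := by
  obtain ⟨q, m, hq, hm, rfl⟩ := hf
  let Ψ : (A ≃g A) → Factorization A (m.comp q) := fun σ =>
    ⟨(⟨σ.toHom.comp q, hq.iso_comp σ⟩, ⟨m.comp σ.symm.toHom, hm.comp σ.symm.injective⟩),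
      by ext; simp⟩
  refine (Nat.card_eq_of_bijective Ψ ⟨fun σ τ h => ?_, ?_⟩).symm
  · have hστ := congrArg (fun p : Factorization A (m.comp q) => p.1.1.1) h
    ext a
    obtain ⟨x, rfl⟩ := hq.1 a
    exact DFunLike.congr_fun hστ x
  · rintro ⟨⟨⟨q', hq'⟩, ⟨m', hm'⟩⟩, h⟩
    obtain ⟨σ, hσq, hσm⟩ := hq.exists_iso_of_comp_eq hq' hm hm' h.symm
    refine ⟨σ, Subtype.ext (Prod.ext (Subtype.ext hσq) (Subtype.ext ?_))⟩
    ext a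
    simp [Ψ, ← hσm]

open scoped Classical in
theorem card_factorization :
    Nat.card (Factorization A f) = if FactorsThrough A f then autCount A else 0 := by
  split_ifs with hf
  · exact hf.card_factorization
  · rw [Nat.card_eq_zero]
    exact .inl ⟨fun ⟨⟨⟨q, hq⟩, ⟨m, hm⟩⟩, h⟩ => hf ⟨q, m, hq, hm, h⟩⟩

variable (G A H) in
theorem quoCount_mul_monCount [Finite V] [Finite W] [Finite U] :
    quoCount G A * monCount A H = autCount A * Nat.card {f : G →g H // FactorsThrough A f} := by
  classical
  have : Fintype (G →g H) := Fintype.ofFinite _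
  let compose (p : {q : G →g A // q.IsQuotient} × {m : A →g H // Injective m}) : G →g H :=
    p.2.1.comp p.1.1
  calc quoCount G A * monCount A H
      = Nat.card ({q : G →g A // q.IsQuotient} × {m : A →g H // Injective m}) :=
        (Nat.card_prod _ _).symm
    _ = ∑ f : G →g H, Nat.card (Factorization A f) := by
        rw [← Nat.card_congr (Equiv.sigmaFiberEquiv compose), Nat.card_sigma]
        rfl
    _ = autCount A * Nat.card {f : G →g H // FactorsThrough A f} := by
        rw [Finset.sum_congr rfl fun f _ => card_factorization, ← Finset.sum_filter,
          Finset.sum_const, smul_eq_mul, Nat.card_eq_fintype_card, Fintype.card_subtype, mul_comm]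

theorem autCount_pos [Finite V] (G : SimpleGraph V) : 0 < autCount G :=
  have := DFunLike.finite (G ≃g G)
  Nat.card_pos (α := G ≃g G)

end SimpleGraph

theorem Nat.card_eq_sum_card_of_existsUnique {α ι : Type*} [Finite α] (S : Finset ι)
    (P : ι → α → Prop) (h : ∀ a, ∃! i, i ∈ S ∧ P i a) :
    Nat.card α = ∑ i ∈ S, Nat.card {a // P i a} := by
  classical
  have : Fintype α := Fintype.ofFinite α
  have hfiber : ∀ a, (S.filter (P · a)).card = 1 := fun a => by
    obtain ⟨i, hi, hunique⟩ := h a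
    refine Finset.card_eq_one.mpr ⟨i, Finset.ext fun j => ?_⟩
    simpa using ⟨fun hj => hunique j hj, fun hj => hj ▸ hi⟩
  calc Nat.card α = ∑ a : α, (S.filter (P · a)).card := by simp [hfiber]
    _ = ∑ i ∈ S, Nat.card {a // P i a} := by
      simp_rw [Finset.card_filter, Nat.card_eq_fintype_card, Fintype.card_subtype,
        Finset.card_filter]
      exact Finset.sum_comm

/-- Only graphs on at most `|V(G)|` vertices are quotients of `G`, so representatives of these
suffice. -/
theorem lovasz_formula {VG VH : Type} [Fintype VG] [Fintype VH]
    (G : SimpleGraph VG) (H : SimpleGraph VH)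
    (S : Finset (Σ k : Fin (Fintype.card VG + 1), SimpleGraph (Fin k)))
    (hS : ∀ (k : Fin (Fintype.card VG + 1)) (A : SimpleGraph (Fin k)),
      ∃! s, s ∈ S ∧ Nonempty (A ≃g s.2)) :
    (homCount G H : ℚ) =
      ∑ s ∈ S, (quoCount G s.2 : ℚ) / (autCount s.2) * (monCount s.2 H) := by
  have hunique : ∀ f : G →g H, ∃! s, s ∈ S ∧ SimpleGraph.FactorsThrough s.2 f := by
    intro f
    obtain ⟨k, hk, A, hA⟩ := SimpleGraph.exists_factorsThrough_fin f
    obtain ⟨s, ⟨hsS, ⟨ψ⟩⟩, -⟩ := hS ⟨k, Nat.lt_succ_of_le hk⟩ A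
    refine ⟨s, ⟨hsS, hA.of_iso ψ⟩, fun t ⟨htS, ht⟩ => ?_⟩
    obtain ⟨σ⟩ := ht.nonempty_iso (hA.of_iso ψ)
    exact (hS s.1 s.2).unique ⟨htS, ⟨σ.symm⟩⟩ ⟨hsS, ⟨.refl⟩⟩
  rw [homCount, Nat.card_eq_sum_card_of_existsUnique S _ hunique, Nat.cast_sum]
  refine Finset.sum_congr rfl fun s _ => ?_
  have haut : (autCount s.2 : ℚ) ≠ 0 := Nat.cast_ne_zero.mpr (SimpleGraph.autCount_pos s.2).ne'
  rw [div_mul_eq_mul_div, eq_div_iff haut, ← Nat.cast_mul, ← Nat.cast_mul,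
    SimpleGraph.quoCount_mul_monCount, mul_comm]
end

section
/- Let 𝓕 be a class of finite graphs closed under taking subgraphs. If G, H ∈ 𝓕 satisfy hom(A,G) = hom(A,H) for all A ∈ 𝓕, then G and H are isomorphic. -/
open Function

universe u

noncomputable instance Setoid.instFintype {α : Type*} [Finite α] : Fintype (Setoid α) :=
  have : Finite (Setoid α) := Finite.of_injective _ fun _ _ => Setoid.eq_iff_rel_eq.2
  Fintype.ofFinite _

theorem Setoid.natCard_quotient_lt {α : Type*} [Finite α] {s : Setoid α} (hs : s ≠ ⊥) :
    Nat.card (Quotient s) < Nat.card α := by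
  refine (Nat.card_le_card_of_surjective _ Quotient.mk_surjective).lt_of_ne fun h => hs ?_
  have hinj := (Quotient.mk_surjective.bijective_of_nat_card_le h.ge).1
  rwa [Setoid.injective_iff_ker_bot, Setoid.ker_mk_eq] at hinj

namespace SimpleGraph

variable {V V' W : Type*} {A : SimpleGraph W} {G : SimpleGraph V}

instance [Finite W] [Finite V] : Finite (A.Copy G) := DFunLike.finite _

theorem homCount_eq_sum_natCard_ker [Finite W] [Finite V] :
    homCount A G = ∑ s : Setoid W, Nat.card {f : A →g G // Setoid.ker f = s} :=
  (Nat.card_congr (Equiv.sigmaFiberEquiv fun f : A →g G => Setoid.ker f).symm).trans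
    Nat.card_sigma

def homKerEqBotEquivCopy : {f : A →g G // Setoid.ker f = ⊥} ≃ A.Copy G where
  toFun f := ⟨f.1, (Setoid.injective_iff_ker_bot _).2 f.2⟩
  invFun f := ⟨f.toHom, (Setoid.injective_iff_ker_bot _).1 f.injective⟩

def homKerEqEquivCopyMapQuotient {s : Setoid W} (hs : ∀ ⦃u v⦄, A.Adj u v → ¬ s u v) :
    {f : A →g G // Setoid.ker f = s} ≃ (A.map (Quotient.mk s)).Copy G where
  toFun f :=
    ⟨⟨Quotient.lift f f.2.ge, by
        rintro _ _ ⟨-, a, b, hab, rfl, rfl⟩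
        exact f.1.map_rel hab⟩,
      (Setoid.lift_injective_iff_ker_eq_of_le f.2.ge).2 f.2⟩
  invFun g :=
    ⟨g.toHom.comp (Hom.map _ A fun huv heq => hs huv (Quotient.exact heq)),
      Setoid.ext fun _ _ => g.injective.eq_iff.trans Quotient.eq⟩
  left_inv _ := rfl
  right_inv g := Copy.ext fun x => Quotient.inductionOn x fun _ => rfl

theorem isEmpty_homKerEq {s : Setoid W} (hs : ¬ ∀ ⦃u v⦄, A.Adj u v → ¬ s u v) :
    IsEmpty {f : A →g G // Setoid.ker f = s} := by
  refine ⟨fun ⟨f, hf⟩ => hs fun u v huv hs => (f.map_adj huv).ne ?_⟩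
  rwa [← hf] at hs

theorem IsContained.nonempty_iso [Finite V] [Finite V'] {H : SimpleGraph V'} (hGH : G ⊑ H)
    (hHG : H ⊑ G) : Nonempty (G ≃g H) := by
  obtain ⟨f⟩ := hGH
  obtain ⟨g⟩ := hHG
  have hbij : Bijective f :=
    f.injective.bijective_of_nat_card_le (Nat.card_le_card_of_injective g g.injective)
  have hedge : Surjective f.mapEdgeSet := (f.mapEdgeSet.injective.bijective_of_nat_card_le
    (Nat.card_le_card_of_injective _ g.mapEdgeSet.injective)).2
  refine ⟨⟨Equiv.ofBijective f hbij, fun {a b} => ⟨fun hab => ?_, f.toHom.map_adj⟩⟩⟩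
  obtain ⟨⟨e, he⟩, hfe⟩ := hedge ⟨s(f a, f b), hab⟩
  have : e = s(a, b) := Sym2.map.injective f.injective (congrArg Subtype.val hfe)
  rwa [this, mem_edgeSet] at he

theorem natCard_homKerEq_eq_of_natCard_copy_eq {H : SimpleGraph V'} {s : Setoid W}
    (h : Nat.card ((A.map (Quotient.mk s)).Copy G) = Nat.card ((A.map (Quotient.mk s)).Copy H)) :
    Nat.card {f : A →g G // Setoid.ker f = s} = Nat.card {f : A →g H // Setoid.ker f = s} := by
  by_cases hs : ∀ ⦃u v⦄, A.Adj u v → ¬ s u v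
  · rwa [Nat.card_congr (homKerEqEquivCopyMapQuotient hs),
      Nat.card_congr (homKerEqEquivCopyMapQuotient hs)]
  · have := isEmpty_homKerEq (G := G) hs
    have := isEmpty_homKerEq (G := H) hs
    simp only [Nat.card_of_isEmpty]

theorem natCard_copy_eq_of_homCount_eq [Finite V] [Finite V'] {H : SimpleGraph V'}
    (h : ∀ (W : Type u) [Fintype W] (A : SimpleGraph W), A ⊑ G ∨ A ⊑ H →
      homCount A G = homCount A H)
    {W : Type u} [Finite W] (A : SimpleGraph W) :
    Nat.card (A.Copy G) = Nat.card (A.Copy H) := by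
  classical
  induction hn : Nat.card W using Nat.strong_induction_on generalizing W with
  | _ n ih =>
  by_cases hA : A ⊑ G ∨ A ⊑ H
  · have := Fintype.ofFinite W
    have hhom := h W A hA
    rw [homCount_eq_sum_natCard_ker, homCount_eq_sum_natCard_ker,
      ← Finset.add_sum_erase _ _ (Finset.mem_univ ⊥),
      ← Finset.add_sum_erase _ _ (Finset.mem_univ ⊥),
      Nat.card_congr homKerEqBotEquivCopy, Nat.card_congr homKerEqBotEquivCopy] at hhom
    refine Nat.add_right_cancel (hhom.trans (congrArg _ (Finset.sum_congr rfl fun s hs => ?_)).symm)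
    exact natCard_homKerEq_eq_of_natCard_copy_eq <|
      ih _ (hn ▸ Setoid.natCard_quotient_lt (Finset.ne_of_mem_erase hs)) _ rfl
  · obtain ⟨hG, hH⟩ := not_or.1 hA
    have := not_nonempty_iff.1 hG
    have := not_nonempty_iff.1 hH
    simp only [Nat.card_of_isEmpty]

end SimpleGraph

open SimpleGraph in
/-- Lovász-type isomorphism theorem for a subgraph-closed class of finite graphs:
if G, H belong to a class 𝓕 of finite graphs closed under taking subgraphs, and every
member of 𝓕 admits the same number of homomorphisms into G as into H, then G and H
are isomorphic. -/
theorem iso_of_homCount_eq_of_subgraph_closed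
    (F : ∀ V : Type, SimpleGraph V → Prop)
    (hclosed : ∀ (V : Type) [Fintype V] (G : SimpleGraph V), F V G →
      ∀ (W : Type) [Fintype W] (B : SimpleGraph W),
        (∃ f : W ↪ V, ∀ a b : W, B.Adj a b → G.Adj (f a) (f b)) → F W B)
    {VG VH : Type} [Fintype VG] [Fintype VH]
    (G : SimpleGraph VG) (H : SimpleGraph VH)
    (hG : F VG G) (hH : F VH H)
    (hhom : ∀ (W : Type) [Fintype W] (A : SimpleGraph W), F W A →
      homCount A G = homCount A H) :
    Nonempty (G ≃g H) := by
  have mem_of_isContained {W : Type} [Fintype W] {A : SimpleGraph W} :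
      A ⊑ G ∨ A ⊑ H → F W A := by
    rintro (hAG | hAH)
    · exact hclosed VG G hG W A (isContained_iff_exists_le_comap.1 hAG)
    · exact hclosed VH H hH W A (isContained_iff_exists_le_comap.1 hAH)
  have hcount {W : Type} [Finite W] (A : SimpleGraph W) :
      Nat.card (A.Copy G) = Nat.card (A.Copy H) :=
    natCard_copy_eq_of_homCount_eq (fun W _ B hB => hhom W B (mem_of_isContained hB)) A
  have hself {W : Type} [Finite W] (A : SimpleGraph W) : 0 < Nat.card (A.Copy A) :=
    Nat.card_pos_iff.2 ⟨IsContained.rfl, inferInstance⟩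
  exact IsContained.nonempty_iso (Nat.card_pos_iff.1 (hcount G ▸ hself G)).1
    (Nat.card_pos_iff.1 ((hcount H).symm ▸ hself H)).1
end
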